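/- arXiv:2202.13718 — 2 statements merged into one kernel-verified Lean document; each statement's English description precedes it below -/
import Mathlib

section
/- Let l be (M,m)-(restricted smooth, restricted strongly concave) on the sparse subdomain Ω_{2k}, with 0 < m ≤ M. Then for every pair of subsets S, T ⊆ [n] each of size at most k (with the maximizers β^(S) and β^(S∪T) assumed to exist), it holds that 2M · f_S(T) ≥ ‖∇l(β^(S))_T‖₂² ≥ 2m · f_S(T). -/
open scoped BigOperators

noncomputable section

abbrev Euc (n : ℕ) := EuclideanSpace ℝ (Fin n)

/-- Number of nonzero coordinates (the ℓ₀ "norm"). -/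
def norm0 {n : ℕ} (x : Euc n) : ℕ := (Finset.univ.filter fun i => x i ≠ 0).card

/-- `l` is (M,m)-(restricted smooth, restricted strongly concave) on the sparse
subdomain `Ω_r`, with gradient `g`. -/
def IsRSCSM {n : ℕ} (l : Euc n → ℝ) (g : Euc n → Euc n) (M m : ℝ) (r : ℕ) : Prop :=
  ∀ x y : Euc n, norm0 x ≤ r → norm0 y ≤ r → norm0 (x - y) ≤ r →
    (l y - l x - (inner ℝ (g x) (y - x) : ℝ) ≤ -(m / 2) * ‖y - x‖ ^ 2) ∧
    (-(M / 2) * ‖y - x‖ ^ 2 ≤ l y - l x - (inner ℝ (g x) (y - x) : ℝ))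

/-- `x` is supported in the index set `S`. -/
def SuppIn {n : ℕ} (S : Finset (Fin n)) (x : Euc n) : Prop := ∀ i, i ∉ S → x i = 0

/-- The support selection function `f(S) = l(β^(S)) - l(0)`. -/
def fsel {n : ℕ} (l : Euc n → ℝ) (B : Finset (Fin n) → Euc n) (S : Finset (Fin n)) : ℝ :=
  l (B S) - l 0

/-!
Upper bound: moving from `β^(S)` by the gradient step `M⁻¹ ∇l(β^(S))_T` stays supported in
`S ∪ T`, and restricted smoothness says this step alone gains at least `‖∇l(β^(S))_T‖² / 2M`,
which `β^(S ∪ T)` can only beat.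
Lower bound: by first-order optimality `∇l(β^(S))` vanishes on `S`, so in the strong concavity
inequality between `β^(S)` and `β^(S ∪ T)` only the `T`-coordinates of the gradient survive, and
maximising the resulting concave quadratic gives `f_S(T) ≤ ‖∇l(β^(S))_T‖² / 2m`.
-/

open scoped RealInnerProductSpace

lemma HasGradientAt.inner_eq_zero_of_forall_le {E : Type*} [NormedAddCommGroup E]
    [InnerProductSpace ℝ E] [CompleteSpace E] {l : E → ℝ} {G x v : E}
    (hl : HasGradientAt l G x) (hmax : ∀ t : ℝ, l (x + t • v) ≤ l x) : ⟪G, v⟫ = 0 := by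
  have hline : HasDerivAt (fun t : ℝ => x + t • v) v 0 := by
    simpa using ((hasDerivAt_id (0 : ℝ)).smul_const v).const_add x
  have hderiv : HasDerivAt (fun t : ℝ => l (x + t • v)) ⟪G, v⟫ 0 := by
    have hl0 : HasFDerivAt l (InnerProductSpace.toDual ℝ E G) (x + (0 : ℝ) • v) := by
      simpa using hl.hasFDerivAt
    have hcomp := hl0.comp_hasDerivAt 0 hline
    rw [InnerProductSpace.toDual_apply_apply] at hcomp
    exact hcomp
  refine IsLocalMax.hasDerivAt_eq_zero (Filter.Eventually.of_forall fun t => ?_) hderiv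
  simpa using hmax t

lemma inner_sub_half_mul_norm_sq_le {E : Type*} [NormedAddCommGroup E] [InnerProductSpace ℝ E]
    {m : ℝ} (hm : 0 < m) (a d : E) : ⟪a, d⟫ - m / 2 * ‖d‖ ^ 2 ≤ ‖a‖ ^ 2 / (2 * m) := by
  rw [le_div_iff₀ (by positivity)]
  have := norm_sub_sq_real a (m • d)
  rw [inner_smul_right, norm_smul, Real.norm_of_nonneg hm.le] at this
  nlinarith [sq_nonneg ‖a - m • d‖]

namespace SuppIn

variable {n : ℕ} {S T : Finset (Fin n)} {x y : Euc n}

lemma mono (hx : SuppIn S x) (hST : S ⊆ T) : SuppIn T x :=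
  fun i hi => hx i fun hiS => hi (hST hiS)

lemma add (hx : SuppIn S x) (hy : SuppIn S y) : SuppIn S (x + y) := by
  intro i hi
  simp [hx i hi, hy i hi]

lemma sub (hx : SuppIn S x) (hy : SuppIn S y) : SuppIn S (x - y) := by
  intro i hi
  simp [hx i hi, hy i hi]

lemma smul (c : ℝ) (hx : SuppIn S x) : SuppIn S (c • x) := by
  intro i hi
  simp [hx i hi]

lemma norm0_le_card (hx : SuppIn S x) : norm0 x ≤ S.card :=
  Finset.card_le_card fun i hi => by
    by_contra hiS
    exact (Finset.mem_filter.1 hi).2 (hx i hiS)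

end SuppIn

/-- The paper's `x_T`. -/
def restrictTo {n : ℕ} (T : Finset (Fin n)) (x : Euc n) : Euc n :=
  WithLp.toLp 2 fun j => if j ∈ T then x j else 0

section restrictTo

variable {n : ℕ} (T : Finset (Fin n)) (x : Euc n)

@[simp]
lemma restrictTo_apply (j : Fin n) : restrictTo T x j = if j ∈ T then x j else 0 := rfl

lemma suppIn_restrictTo : SuppIn T (restrictTo T x) := fun j hj => by simp [hj]

lemma norm_restrictTo_sq : ‖restrictTo T x‖ ^ 2 = ∑ j ∈ T, x j ^ 2 := by
  rw [EuclideanSpace.norm_sq_eq]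
  simp [Finset.sum_ite_mem]

lemma inner_restrictTo_self : ⟪x, restrictTo T x⟫ = ‖restrictTo T x‖ ^ 2 := by
  rw [norm_restrictTo_sq, PiLp.inner_apply]
  simp [apply_ite, Finset.sum_ite_mem, sq]

lemma inner_eq_inner_restrictTo {S : Finset (Fin n)} {d : Euc n} (hx : ∀ j ∈ S, x j = 0)
    (hd : SuppIn (S ∪ T) d) : ⟪x, d⟫ = ⟪restrictTo T x, d⟫ := by
  simp only [PiLp.inner_apply]
  refine Finset.sum_congr rfl fun j _ => ?_
  by_cases hjT : j ∈ T
  · simp [hjT]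
  by_cases hjS : j ∈ S
  · simp [hjT, hx j hjS]
  · simp [hjT, hd j (by simp [hjS, hjT])]

end restrictTo

lemma grad_apply_eq_zero_of_forall_suppIn_le {n : ℕ} {l : Euc n → ℝ} {G β : Euc n}
    {S : Finset (Fin n)} (hl : HasGradientAt l G β) (hβ : SuppIn S β)
    (hmax : ∀ x, SuppIn S x → l x ≤ l β) {j : Fin n} (hj : j ∈ S) : G j = 0 := by
  have hsupp : SuppIn S (EuclideanSpace.single j (1 : ℝ)) := fun i hi => by
    simp [show i ≠ j from fun h => hi (h ▸ hj)]
  simpa [EuclideanSpace.inner_single_right] using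
    hl.inner_eq_zero_of_forall_le fun t => hmax _ (hβ.add (hsupp.smul t))

section Bounds

variable {n r : ℕ} {l : Euc n → ℝ} {g : Euc n → Euc n} {M m : ℝ} {S T U : Finset (Fin n)}

lemma IsRSCSM.bounds_of_suppIn (hl : IsRSCSM l g M m r) (hU : U.card ≤ r) {x y : Euc n}
    (hx : SuppIn U x) (hy : SuppIn U y) :
    l y - l x - ⟪g x, y - x⟫ ≤ -(m / 2) * ‖y - x‖ ^ 2 ∧
      -(M / 2) * ‖y - x‖ ^ 2 ≤ l y - l x - ⟪g x, y - x⟫ :=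
  hl x y (hx.norm0_le_card.trans hU) (hy.norm0_le_card.trans hU)
    ((hx.sub hy).norm0_le_card.trans hU)

/-- Smoothness is applied at the test point `β + M⁻¹ ∇l(β)_T`, which is supported in `S ∪ T`. -/
lemma norm_sq_restrictTo_grad_le (hM : 0 < M) (hl : IsRSCSM l g M m r)
    (hr : (S ∪ T).card ≤ r) {β γ : Euc n} (hβ : SuppIn S β)
    (hγ : ∀ x, SuppIn (S ∪ T) x → l x ≤ l γ) :
    ‖restrictTo T (g β)‖ ^ 2 ≤ 2 * M * (l γ - l β) := by
  have hβ' : SuppIn (S ∪ T) β := hβ.mono Finset.subset_union_left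
  have hstep : SuppIn (S ∪ T) (β + M⁻¹ • restrictTo T (g β)) :=
    hβ'.add (((suppIn_restrictTo T _).smul _).mono Finset.subset_union_right)
  have hsmooth := (hl.bounds_of_suppIn hr hβ' hstep).2
  have hmax := hγ _ hstep
  rw [add_sub_cancel_left, inner_smul_right, inner_restrictTo_self, norm_smul,
    Real.norm_of_nonneg (inv_nonneg.2 hM.le)] at hsmooth
  generalize restrictTo T (g β) = w at hsmooth hmax ⊢
  have hquad : -(M / 2) * (M⁻¹ * ‖w‖) ^ 2 = M⁻¹ * ‖w‖ ^ 2 / 2 - M⁻¹ * ‖w‖ ^ 2 := by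
    field_simp
    ring
  calc ‖w‖ ^ 2 = 2 * M * (M⁻¹ * ‖w‖ ^ 2 / 2) := by field_simp
    _ ≤ 2 * M * (l γ - l β) := by gcongr; linarith

lemma two_mul_sub_le_norm_sq_restrictTo_grad (hm : 0 < m) (hl : IsRSCSM l g M m r)
    (hr : (S ∪ T).card ≤ r) {β γ : Euc n} (hβ : SuppIn S β) (hγ : SuppIn (S ∪ T) γ)
    (hgrad : ∀ j ∈ S, g β j = 0) :
    2 * m * (l γ - l β) ≤ ‖restrictTo T (g β)‖ ^ 2 := by
  have hβ' : SuppIn (S ∪ T) β := hβ.mono Finset.subset_union_left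
  have hconc := (hl.bounds_of_suppIn hr hβ' hγ).1
  rw [inner_eq_inner_restrictTo T _ hgrad (hγ.sub hβ')] at hconc
  have := inner_sub_half_mul_norm_sq_le hm (restrictTo T (g β)) (γ - β)
  rw [← le_div_iff₀' (by positivity)]
  linarith

end Bounds

theorem stmt1_general {n k : ℕ} (l : Euc n → ℝ) (g : Euc n → Euc n) (M m : ℝ)
    (hm : 0 < m) (hmM : m ≤ M)
    (hgrad : ∀ x, HasGradientAt l (g x) x)
    (hl : IsRSCSM l g M m (2 * k))
    (B : Finset (Fin n) → Euc n)
    (hBsupp : ∀ S, SuppIn S (B S))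
    (hBmax : ∀ S x, SuppIn S x → l x ≤ l (B S))
    (S T : Finset (Fin n)) (hS : S.card ≤ k) (hT : T.card ≤ k) :
    2 * M * (fsel l B (S ∪ T) - fsel l B S) ≥ ∑ j ∈ T, (g (B S) j) ^ 2 ∧
    ∑ j ∈ T, (g (B S) j) ^ 2 ≥ 2 * m * (fsel l B (S ∪ T) - fsel l B S) := by
  have hr : (S ∪ T).card ≤ 2 * k := (Finset.card_union_le S T).trans (by omega)
  have hgradS : ∀ j ∈ S, g (B S) j = 0 := fun j hj =>
    grad_apply_eq_zero_of_forall_suppIn_le (hgrad (B S)) (hBsupp S) (hBmax S) hj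
  rw [fsel, fsel, sub_sub_sub_cancel_right, ← norm_restrictTo_sq]
  exact ⟨norm_sq_restrictTo_grad_le (hm.trans_le hmM) hl hr (hBsupp S) (hBmax (S ∪ T)),
    two_mul_sub_le_norm_sq_restrictTo_grad hm hl hr (hBsupp S) (hBsupp (S ∪ T)) hgradS⟩

theorem stmt1 {n k : ℕ} (l : Euc n → ℝ) (g : Euc n → Euc n) (M m : ℝ)
    (hm : 0 < m) (hmM : m ≤ M)
    (hgrad : ∀ x, HasGradientAt l (g x) x)
    (hl : IsRSCSM l g M m (2 * k))
    (B : Finset (Fin n) → Euc n)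
    (hB0 : B ∅ = 0)
    (hBsupp : ∀ S, SuppIn S (B S))
    (hBmax : ∀ S x, SuppIn S x → l x ≤ l (B S))
    (S T : Finset (Fin n)) (hS : S.card ≤ k) (hT : T.card ≤ k) :
    2 * M * (fsel l B (S ∪ T) - fsel l B S) ≥ ∑ j ∈ T, (g (B S) j) ^ 2 ∧
    ∑ j ∈ T, (g (B S) j) ^ 2 ≥ 2 * m * (fsel l B (S ∪ T) - fsel l B S) :=
  stmt1_general l g M m hm hmM hgrad hl B hBsupp hBmax S T hS hT
end
end

section
/- Let l be (M,m)-(restricted smooth, restricted strongly concave) on the sparse subdomain Ω_{2k}, with 0 < m ≤ M, and define OPT_k := max_{A ⊆ [n], |A| ≤ k} f(A). Then for every set S ⊆ [n] with |S| ≤ k (with the relevant maximizers assumed to exist), it holds that max_{T ⊆ [n], |T| ≤ k} ‖∇l(β^(S))_T‖₂² ≥ 2m · (OPT_k − f(S)). -/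
open scoped BigOperators

noncomputable section

/-- The collection of all subsets of `[n]` of cardinality at most `k`. -/
def cardLE (n k : ℕ) : Finset (Finset (Fin n)) :=
  (Finset.univ : Finset (Finset (Fin n))).filter fun A => A.card ≤ k

lemma cardLE_nonempty (n k : ℕ) : (cardLE n k).Nonempty :=
  ⟨∅, by simp [cardLE]⟩

/-- `OPT_k = max_{|A| ≤ k} f(A)`. -/
def OPTk {n : ℕ} (l : Euc n → ℝ) (B : Finset (Fin n) → Euc n) (k : ℕ) : ℝ :=
  (cardLE n k).sup' (cardLE_nonempty n k) (fsel l B)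

/-!
Let `A` attain `OPT_k` and put `x = β^(S)`, `y = β^(A)`. Both are supported in `S ∪ A`, which has at
most `2k` elements, so restricted strong concavity applies to the pair and gives
`2m (l y - l x) ≤ 2m ⟪∇l(x), y - x⟫ - m² ‖y - x‖²`. Since `x` maximizes `l` on vectors supported
in `S`, `∇l(x)` vanishes on `S`; so coordinatewise `2m g_j d_j - m² d_j² ≤ g_j²` on `A`, `≤ 0` on
`S \ A`, and `= 0` off `S ∪ A`, whence `2m (OPT_k - f(S)) ≤ ‖∇l(x)_A‖²`.
-/

open Finset RealInnerProductSpace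

section Support

variable {n : ℕ} {S T : Finset (Fin n)} {x y : Euc n}

lemma SuppIn.norm0_le (hx : SuppIn S x) : norm0 x ≤ S.card :=
  card_le_card fun i hi => by
    by_contra hiS
    exact (mem_filter.mp hi).2 (hx i hiS)

lemma SuppIn.sub_s5 (hx : SuppIn S x) (hy : SuppIn T y) : SuppIn (S ∪ T) (x - y) := by
  intro i hi
  rw [mem_union, not_or] at hi
  simp [hx i hi.1, hy i hi.2]

lemma SuppIn.add_smul_single (hx : SuppIn S x) {i : Fin n} (hi : i ∈ S) (t : ℝ) :
    SuppIn S (x + t • EuclideanSpace.single i 1) := by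
  intro j hj
  have hji : j ≠ i := fun h => hj (h ▸ hi)
  simp [hx j hj, hji]

end Support

lemma inner_eq_zero_of_hasGradientAt_of_forall_add_smul_le {E : Type*} [NormedAddCommGroup E]
    [InnerProductSpace ℝ E] [CompleteSpace E] {f : E → ℝ} {f' x v : E}
    (hf : HasGradientAt f f' x) (hmax : ∀ t : ℝ, f (x + t • v) ≤ f x) : ⟪f', v⟫ = 0 := by
  have hline : HasDerivAt (fun t : ℝ => x + t • v) v 0 := by
    simpa using ((hasDerivAt_id (0 : ℝ)).smul_const v).const_add x
  have hderiv : HasDerivAt (fun t : ℝ => f (x + t • v)) ⟪f', v⟫ 0 := by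
    have hf' : HasFDerivAt f (InnerProductSpace.toDual ℝ E f') (x + (0 : ℝ) • v) := by
      simpa using hf.hasFDerivAt
    exact hf'.comp_hasDerivAt 0 hline
  refine IsLocalMax.hasDerivAt_eq_zero (Filter.Eventually.of_forall fun t => ?_) hderiv
  simpa using hmax t

lemma apply_eq_zero_of_hasGradientAt_of_isMaxOn_suppIn {n : ℕ} {l : Euc n → ℝ}
    {S : Finset (Fin n)} {x g : Euc n} (hg : HasGradientAt l g x) (hx : SuppIn S x)
    (hmax : ∀ y, SuppIn S y → l y ≤ l x) {i : Fin n} (hi : i ∈ S) : g i = 0 := by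
  have h := inner_eq_zero_of_hasGradientAt_of_forall_add_smul_le hg
    fun t => hmax _ (hx.add_smul_single hi t)
  simpa [real_inner_comm, EuclideanSpace.inner_single_right] using h

lemma two_mul_inner_sub_sq_mul_norm_sq_le {n : ℕ} {S A : Finset (Fin n)} (m : ℝ) {g d : Euc n}
    (hg : ∀ i ∈ S, g i = 0) (hd : SuppIn (S ∪ A) d) :
    2 * m * ⟪g, d⟫ - m ^ 2 * ‖d‖ ^ 2 ≤ ∑ j ∈ A, g j ^ 2 := by
  have hcoord : ∀ j, 2 * m * (g j * d j) - m ^ 2 * d j ^ 2 ≤ if j ∈ A then g j ^ 2 else 0 := by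
    intro j
    by_cases hjA : j ∈ A
    · rw [if_pos hjA]
      nlinarith [sq_nonneg (g j - m * d j)]
    by_cases hjS : j ∈ S
    · rw [if_neg hjA, hg j hjS]
      nlinarith [sq_nonneg (m * d j)]
    · simp [hjA, hd j (by simp [hjA, hjS])]
  calc 2 * m * ⟪g, d⟫ - m ^ 2 * ‖d‖ ^ 2
      = ∑ j, (2 * m * (g j * d j) - m ^ 2 * d j ^ 2) := by
        rw [EuclideanSpace.real_norm_sq_eq, PiLp.inner_apply, sum_sub_distrib, mul_sum, mul_sum]
        simp only [RCLike.inner_apply, conj_trivial, mul_comm (d _)]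
    _ ≤ ∑ j, if j ∈ A then g j ^ 2 else 0 := sum_le_sum fun j _ => hcoord j
    _ = ∑ j ∈ A, g j ^ 2 := by rw [sum_ite_mem, univ_inter]

lemma IsRSCSM.two_mul_sub_le_sum_sq {n r : ℕ} {l : Euc n → ℝ} {g : Euc n → Euc n} {M m : ℝ}
    (hl : IsRSCSM l g M m r) (hm : 0 ≤ m) {S A : Finset (Fin n)} (hr : S.card + A.card ≤ r)
    {x y : Euc n} (hgrad : HasGradientAt l (g x) x) (hx : SuppIn S x)
    (hmax : ∀ z, SuppIn S z → l z ≤ l x) (hy : SuppIn A y) :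
    2 * m * (l y - l x) ≤ ∑ j ∈ A, g x j ^ 2 := by
  have hdiff : SuppIn (S ∪ A) (y - x) := by
    simpa [union_comm] using hy.sub_s5 hx
  have hconc := (hl x y (hx.norm0_le.trans (by omega)) (hy.norm0_le.trans (by omega))
    ((hx.sub_s5 hy).norm0_le.trans ((card_union_le S A).trans hr))).1
  have hbound := two_mul_inner_sub_sq_mul_norm_sq_le m
    (fun i hi => apply_eq_zero_of_hasGradientAt_of_isMaxOn_suppIn hgrad hx hmax hi) hdiff
  nlinarith [mul_le_mul_of_nonneg_left hconc (by positivity : (0 : ℝ) ≤ 2 * m)]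

theorem stmt5_general {n k : ℕ} (l : Euc n → ℝ) (g : Euc n → Euc n) (M m : ℝ)
    (hm : 0 < m)
    (hgrad : ∀ x, HasGradientAt l (g x) x)
    (hl : IsRSCSM l g M m (2 * k))
    (B : Finset (Fin n) → Euc n)
    (hBsupp : ∀ S, SuppIn S (B S))
    (hBmax : ∀ S x, SuppIn S x → l x ≤ l (B S))
    (S : Finset (Fin n)) (hS : S.card ≤ k) :
    (cardLE n k).sup' (cardLE_nonempty n k) (fun T => ∑ j ∈ T, (g (B S) j) ^ 2)
      ≥ 2 * m * (OPTk l B k - fsel l B S) := by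
  obtain ⟨A, hA, hAopt⟩ := exists_mem_eq_sup' (cardLE_nonempty n k) (fsel l B)
  have hAk : A.card ≤ k := (mem_filter.mp hA).2
  calc 2 * m * (OPTk l B k - fsel l B S) = 2 * m * (l (B A) - l (B S)) := by
        rw [OPTk, hAopt, fsel, fsel, sub_sub_sub_cancel_right]
    _ ≤ ∑ j ∈ A, g (B S) j ^ 2 :=
        hl.two_mul_sub_le_sum_sq hm.le (by omega) (hgrad (B S)) (hBsupp S) (hBmax S) (hBsupp A)
    _ ≤ _ := le_sup' (fun T => ∑ j ∈ T, g (B S) j ^ 2) hA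

theorem stmt5 {n k : ℕ} (l : Euc n → ℝ) (g : Euc n → Euc n) (M m : ℝ)
    (hm : 0 < m) (hmM : m ≤ M)
    (hgrad : ∀ x, HasGradientAt l (g x) x)
    (hl : IsRSCSM l g M m (2 * k))
    (B : Finset (Fin n) → Euc n)
    (hB0 : B ∅ = 0)
    (hBsupp : ∀ S, SuppIn S (B S))
    (hBmax : ∀ S x, SuppIn S x → l x ≤ l (B S))
    (S : Finset (Fin n)) (hS : S.card ≤ k) :
    (cardLE n k).sup' (cardLE_nonempty n k) (fun T => ∑ j ∈ T, (g (B S) j) ^ 2)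
      ≥ 2 * m * (OPTk l B k - fsel l B S) :=
  stmt5_general l g M m hm hgrad hl B hBsupp hBmax S hS
end
end
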